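/- Let D ⊆ Δ⁺ be a basic subset with diagram as defined. A positive root ξ belongs to D if and only if ξ ∈ C(D) and A_ξ = ∅. -/

import Mathlib

/-- A positive root `(i,j)`: `n ≥ i > j ≥ 1`. -/
def IsPosRoot (n : ℕ) (γ : ℕ × ℕ) : Prop := 1 ≤ γ.2 ∧ γ.2 < γ.1 ∧ γ.1 ≤ n

/-- `γ` is the sum of the roots `α` and `β` (in either order):
`(i,j) + (j,k) = (i,k)`. -/
def RootSum (α β γ : ℕ × ℕ) : Prop :=
  (α.2 = β.1 ∧ γ = (α.1, β.2)) ∨ (β.2 = α.1 ∧ γ = (β.1, α.2))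

/-- A basic subset: a set of positive roots with at most one root in each
row and at most one root in each column. -/
def IsBasic (n : ℕ) (D : Set (ℕ × ℕ)) : Prop :=
  (∀ γ ∈ D, IsPosRoot n γ) ∧
  (∀ α ∈ D, ∀ β ∈ D, α.1 = β.1 → α = β) ∧
  (∀ α ∈ D, ∀ β ∈ D, α.2 = β.2 → α = β)

/-- A positive root `α` is `D`-singular if `α + β ∈ D` for some positive root `β`. -/
def IsSingular (n : ℕ) (D : Set (ℕ × ℕ)) (α : ℕ × ℕ) : Prop :=
  IsPosRoot n α ∧ ∃ β γ, IsPosRoot n β ∧ RootSum α β γ ∧ γ ∈ D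

/-- `M(D) = R(D) \ D`, where `R(D)` is the set of `D`-regular positive roots. -/
def MD (n : ℕ) (D : Set (ℕ × ℕ)) : Set (ℕ × ℕ) :=
  {γ | IsPosRoot n γ ∧ ¬ IsSingular n D γ ∧ γ ∉ D}
open scoped Classical

/-- Marks used in the diagram of a basic subset. -/
inductive Mark : Type
  | otimes : Mark
  | plus : Mark
  | minus : Mark
  | bullet : Mark
deriving DecidableEq

/-- A marking state of the diagram: a partial assignment of marks to places. -/
abbrev MState : Type := ℕ × ℕ → Option Mark

/-- Step 0 of the diagram construction: every root of `M(D)` is marked `•`. -/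
noncomputable def initMark (n : ℕ) (D : Set (ℕ × ℕ)) : MState :=
  fun γ => if γ ∈ MD n D then some Mark.bullet else none

/-- One step of the diagram construction: mark `ξ` with `⊗`, and for every
decomposition `ξ = α + β` with `col α = col ξ`, `row β = row ξ` and both
`α`, `β` unmarked, mark `α` with `+` and `β` with `−`. -/
noncomputable def markStep (s : MState) (ξ : ℕ × ℕ) : MState :=
  fun γ =>
    if γ = ξ then some Mark.otimes
    else if γ.2 = ξ.2 ∧ ξ.2 < γ.1 ∧ γ.1 < ξ.1 ∧ s γ = none ∧ s (ξ.1, γ.1) = none then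
      some Mark.plus
    else if γ.1 = ξ.1 ∧ ξ.2 < γ.2 ∧ γ.2 < ξ.1 ∧ s γ = none ∧ s (γ.2, ξ.2) = none then
      some Mark.minus
    else s γ

/-- The list of all positive roots in decreasing order with respect to `≻`
(`(k,m) ≻ (i,j)` iff `m < j`, or `m = j` and `k > i`). -/
def rootList (n : ℕ) : List (ℕ × ℕ) :=
  (List.range n).flatMap (fun j0 =>
    (List.range n).filterMap (fun k =>
      if j0 + 1 < n - k then some (n - k, j0 + 1) else none))

/-- Run the diagram construction along a list of places, recording at each
step `i` the pair (`ξ_i`, state after step `i`). -/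
noncomputable def diagRun (s : MState) : List (ℕ × ℕ) → List ((ℕ × ℕ) × MState)
  | [] => []
  | ξ :: rest =>
    if s ξ = none then (ξ, markStep s ξ) :: diagRun (markStep s ξ) rest
    else diagRun s rest

/-- The full run of the diagram construction for a basic subset `D`. -/
noncomputable def diagSeq (n : ℕ) (D : Set (ℕ × ℕ)) : List ((ℕ × ℕ) × MState) :=
  diagRun (initMark n D) (rootList n)

/-- `c`, the number of steps (= number of `⊗` marks) of the diagram. -/
noncomputable def numSteps (n : ℕ) (D : Set (ℕ × ℕ)) : ℕ := (diagSeq n D).length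

/-- `ξ_i`, the root marked `⊗` at step `i` (for `1 ≤ i ≤ c`). -/
noncomputable def xiRoot (n : ℕ) (D : Set (ℕ × ℕ)) (i : ℕ) : ℕ × ℕ :=
  (((diagSeq n D).getD (i - 1) ((0, 0), initMark n D))).1

/-- The state of the diagram after step `i` (for `0 ≤ i ≤ c`); the state
"before step `i`" is `stateAfter n D (i-1)`. -/
noncomputable def stateAfter (n : ℕ) (D : Set (ℕ × ℕ)) : ℕ → MState
  | 0 => initMark n D
  | i + 1 => (((diagSeq n D).getD i ((0, 0), initMark n D))).2

/-- `C(D)`: the set of roots marked `⊗` on the diagram. -/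
noncomputable def CD (n : ℕ) (D : Set (ℕ × ℕ)) : Set (ℕ × ℕ) :=
  {γ | γ ∈ (diagSeq n D).map Prod.fst}

/-- `A_γ`: the set of roots of `C(D)` in the same row as `γ`, strictly to the
left of `γ`. -/
noncomputable def AD (n : ℕ) (D : Set (ℕ × ℕ)) (γ : ℕ × ℕ) : Set (ℕ × ℕ) :=
  {γ' | γ' ∈ CD n D ∧ γ'.1 = γ.1 ∧ γ'.2 < γ.2}

def key (n : ℕ) (γ : ℕ × ℕ) : ℕ := n * γ.2 - γ.1

lemma key_lt_of_col_lt {n : ℕ} {a b : ℕ × ℕ} (ha : a.1 ≤ n) (hb1 : b.1 ≤ n)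
    (h : a.2 < b.2) (ha2 : 1 ≤ a.2) (ha1 : 1 ≤ a.1) : key n a < key n b := by
  unfold key
  have h1 : n * a.2 + n ≤ n * b.2 := by
    calc n * a.2 + n = n * (a.2 + 1) := by ring
    _ ≤ n * b.2 := Nat.mul_le_mul_left n h
  have h3 : a.1 ≤ n * a.2 := le_trans ha (by nlinarith)
  generalize n * a.2 = p at h1 h3 ⊢
  generalize n * b.2 = q at h1 ⊢
  omega

lemma key_lt_of_row_gt {n : ℕ} {a b : ℕ × ℕ} (ha : a.1 ≤ n) (ha2 : 1 ≤ a.2)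
    (h2 : a.2 = b.2) (h : b.1 < a.1) : key n a < key n b := by
  unfold key
  rw [← h2]
  have h3 : a.1 ≤ n * a.2 := le_trans ha (by nlinarith)
  generalize n * a.2 = p at h3 ⊢
  omega

lemma mem_rootList {n : ℕ} {γ : ℕ × ℕ} : γ ∈ rootList n ↔ IsPosRoot n γ := by
  unfold rootList IsPosRoot
  simp only [List.mem_flatMap, List.mem_filterMap, List.mem_range]
  constructor
  · rintro ⟨j0, hj0, k, hk, h⟩
    split at h
    · rename_i hc; cases h; simp; omega
    · cases h
  · rintro ⟨h1, h2, h3⟩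
    refine ⟨γ.2 - 1, by omega, n - γ.1, by omega, ?_⟩
    rw [if_pos (by omega)]
    have : n - (n - γ.1) = γ.1 := by omega
    rw [this]
    have : γ.2 - 1 + 1 = γ.2 := by omega
    rw [this]

lemma rootList_pairwise (n : ℕ) :
    (rootList n).Pairwise (fun a b => key n a < key n b) := by
  unfold rootList
  rw [List.pairwise_flatMap]
  constructor
  · intro j0 _
    rw [List.pairwise_filterMap]
    refine List.Pairwise.imp ?_ List.pairwise_lt_range
    intro k1 k2 hk x hx y hy
    split at hx
    · cases hx
      split at hy
      · cases hy
        exact key_lt_of_row_gt (by omega) (by omega) rfl (by omega)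
      · cases hy
    · cases hx
  · refine List.Pairwise.imp ?_ List.pairwise_lt_range
    intro j1 j2 hj x hx y hy
    simp only [List.mem_filterMap, List.mem_range] at hx hy
    obtain ⟨k1, _, h1⟩ := hx
    obtain ⟨k2, _, h2⟩ := hy
    split at h1
    · cases h1
      split at h2
      · cases h2
        exact key_lt_of_col_lt (by omega) (by omega) (by omega) (by omega) (by omega)
      · cases h2
    · cases h1

lemma key_lt_iff {n : ℕ} {a b : ℕ × ℕ} (ha : IsPosRoot n a) (hb : IsPosRoot n b) :
    key n a < key n b ↔ (a.2 < b.2 ∨ (a.2 = b.2 ∧ b.1 < a.1)) := by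
  obtain ⟨ha1, ha2, ha3⟩ := ha
  obtain ⟨hb1, hb2, hb3⟩ := hb
  constructor
  · intro h
    by_contra hc
    push_neg at hc
    rcases Nat.lt_trichotomy a.2 b.2 with h' | h' | h'
    · exact absurd h' (by omega)
    · have := hc.2 h'
      rcases Nat.lt_trichotomy a.1 b.1 with h'' | h'' | h''
      · have hk : key n b < key n a := key_lt_of_row_gt (a := b) (b := a) (by omega) (by omega) h'.symm h''
        omega
      · rw [show a = b from Prod.ext h'' h'] at h; omega
      · omega
    · have hk : key n b < key n a := key_lt_of_col_lt (a := b) (b := a) (by omega) (by omega) h' (by omega) (by omega)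
      omega
  · rintro (h | ⟨h1, h2⟩)
    · exact key_lt_of_col_lt (by omega) (by omega) h (by omega) (by omega)
    · exact key_lt_of_row_gt (by omega) (by omega) h1 h2

-- continuation: assumes defs from statement file
section Helpers
variable {n : ℕ} {D : Set (ℕ × ℕ)}

lemma singular_of_row (hD : IsBasic n D) {i j j' : ℕ} (hpos : IsPosRoot n (i, j))
    (hd : (i, j') ∈ D) (hj : j' < j) : IsSingular n D (i, j) := by
  obtain ⟨h1, h2, h3⟩ := hpos
  obtain ⟨d1, d2, d3⟩ := hD.1 _ hd
  exact ⟨⟨h1, h2, h3⟩, (j, j'), (i, j'), ⟨d1, hj, by simp at h3 ⊢; omega⟩,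
    Or.inl ⟨rfl, rfl⟩, hd⟩

lemma singular_of_col (hD : IsBasic n D) {i j x : ℕ} (hpos : IsPosRoot n (i, j))
    (hd : (x, j) ∈ D) (hx : i < x) : IsSingular n D (i, j) := by
  obtain ⟨h1, h2, h3⟩ := hpos
  obtain ⟨d1, d2, d3⟩ := hD.1 _ hd
  exact ⟨⟨h1, h2, h3⟩, (x, i), (x, j), ⟨by simp; omega, hx, d3⟩,
    Or.inr ⟨rfl, rfl⟩, hd⟩

/-- If a positive root is not in `M(D)`, it is in `D` or has a `D`-element
strictly left in its row or strictly below in its column. -/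
lemma of_not_mem_MD (hD : IsBasic n D) {γ : ℕ × ℕ} (hpos : IsPosRoot n γ)
    (h : γ ∉ MD n D) :
    γ ∈ D ∨ (∃ j < γ.2, (γ.1, j) ∈ D) ∨ (∃ x > γ.1, (x, γ.2) ∈ D) := by
  by_cases hd : γ ∈ D
  · exact Or.inl hd
  have hsing : IsSingular n D γ := by
    by_contra hs
    exact h ⟨hpos, hs, hd⟩
  obtain ⟨-, β, γ', hβ, hsum, hγ'⟩ := hsing
  rcases hsum with ⟨h1, h2⟩ | ⟨h1, h2⟩
  · refine Or.inr (Or.inl ⟨β.2, ?_, ?_⟩)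
    · have := hβ.2.1; omega
    · rw [← h2]; exact hγ'
  · refine Or.inr (Or.inr ⟨β.1, ?_, ?_⟩)
    · have := hβ.2.1; omega
    · rw [← h2]; exact hγ'

lemma mem_D_not_MD {γ : ℕ × ℕ} (hd : γ ∈ D) : γ ∉ MD n D := fun h => h.2.2 hd

lemma MD_pos {γ : ℕ × ℕ} (h : γ ∈ MD n D) : IsPosRoot n γ := h.1

/-- Row uniqueness in a basic subset. -/
lemma row_uniq (hD : IsBasic n D) {i j j' : ℕ} (h : (i, j) ∈ D) (h' : (i, j') ∈ D) :
    j = j' := by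
  have := hD.2.1 _ h _ h' rfl
  exact congrArg Prod.snd this

/-- Column uniqueness in a basic subset. -/
lemma col_uniq (hD : IsBasic n D) {i i' j : ℕ} (h : (i, j) ∈ D) (h' : (i', j) ∈ D) :
    i = i' := by
  have := hD.2.2 _ h _ h' rfl
  exact congrArg Prod.fst this

/-- Case analysis for `markStep`. -/
lemma markStep_cases (s : MState) (ξ γ : ℕ × ℕ) :
    (γ = ξ ∧ markStep s ξ γ = some Mark.otimes) ∨
    (γ.2 = ξ.2 ∧ ξ.2 < γ.1 ∧ γ.1 < ξ.1 ∧ s γ = none ∧ s (ξ.1, γ.1) = none ∧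
      markStep s ξ γ = some Mark.plus) ∨
    (γ.1 = ξ.1 ∧ ξ.2 < γ.2 ∧ γ.2 < ξ.1 ∧ s γ = none ∧ s (γ.2, ξ.2) = none ∧
      markStep s ξ γ = some Mark.minus) ∨
    markStep s ξ γ = s γ := by
  unfold markStep
  by_cases h1 : γ = ξ
  · exact Or.inl ⟨h1, by rw [if_pos h1]⟩
  rw [if_neg h1]
  by_cases h2 : γ.2 = ξ.2 ∧ ξ.2 < γ.1 ∧ γ.1 < ξ.1 ∧ s γ = none ∧ s (ξ.1, γ.1) = none
  · exact Or.inr (Or.inl ⟨h2.1, h2.2.1, h2.2.2.1, h2.2.2.2.1, h2.2.2.2.2, by rw [if_pos h2]⟩)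
  rw [if_neg h2]
  by_cases h3 : γ.1 = ξ.1 ∧ ξ.2 < γ.2 ∧ γ.2 < ξ.1 ∧ s γ = none ∧ s (γ.2, ξ.2) = none
  · exact Or.inr (Or.inr (Or.inl ⟨h3.1, h3.2.1, h3.2.2.1, h3.2.2.2.1, h3.2.2.2.2, by rw [if_pos h3]⟩))
  · rw [if_neg h3]; exact Or.inr (Or.inr (Or.inr rfl))

lemma markStep_self (s : MState) (ξ : ℕ × ℕ) : markStep s ξ ξ = some Mark.otimes := by
  unfold markStep; rw [if_pos rfl]

lemma markStep_none {s : MState} {ξ γ : ℕ × ℕ} (h : markStep s ξ γ = none) :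
    s γ = none ∧ γ ≠ ξ := by
  rcases markStep_cases s ξ γ with ⟨h1, h2⟩ | ⟨_, _, _, h4, _, h2⟩ | ⟨_, _, _, h4, _, h2⟩ | h2
  · rw [h2] at h; cases h
  · rw [h2] at h; cases h
  · rw [h2] at h; cases h
  · rw [h2] at h
    refine ⟨h, ?_⟩
    rintro rfl
    rw [markStep_self] at h2
    rw [h] at h2; cases h2

end Helpers

section DInvariant
variable {n : ℕ} {D : Set (ℕ × ℕ)}

/-- The inductive invariant of the diagram construction:
`u` is the list of already-processed places, `s` the current marking state. -/
structure DInv (n : ℕ) (D : Set (ℕ × ℕ)) (u : List (ℕ × ℕ)) (s : MState) : Prop where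
  i0 : ∀ γ, ¬ IsPosRoot n γ → s γ = none
  i1 : ∀ γ ∈ u, s γ ≠ none
  i2 : ∀ γ, s γ = some Mark.bullet ↔ γ ∈ MD n D
  i3 : ∀ γ, s γ = some Mark.otimes → γ ∈ u ∧ ∃ j ≤ γ.2, (γ.1, j) ∈ D
  i4 : ∀ γ, s γ = some Mark.minus → ∃ y, y < γ.2 ∧ (γ.1, y) ∈ u ∧ ∃ j ≤ y, (γ.1, j) ∈ D
  i5 : ∀ γ, s γ = some Mark.plus → ∃ x, γ.1 < x ∧ (x, γ.2) ∈ u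
  i6 : ∀ γ ∈ D, γ ∈ u ∨ s γ = none
  i7 : ∀ γ x, γ.2 < γ.1 → γ.1 < x → (x, γ.2) ∈ D → (x, γ.2) ∈ u → s γ ≠ none
  i8 : ∀ X c ρ, (X, c) ∈ D → (X, c) ∈ u → c < ρ → ρ < X →
        (∃ J', c < J' ∧ (ρ, J') ∈ D) → s (X, ρ) ≠ none
  i9 : ∀ X c ρ, (X, c) ∈ D → (X, c) ∉ u → c < ρ → ρ < X →
        (∃ J', c < J' ∧ (ρ, J') ∈ D) → s (ρ, c) = none

lemma inv_init (hD : IsBasic n D) : DInv n D [] (initMark n D) := by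
  have hinit : ∀ γ, initMark n D γ = if γ ∈ MD n D then some Mark.bullet else none :=
    fun γ => rfl
  constructor
  · intro γ h
    rw [hinit]
    rw [if_neg (fun hm => h (MD_pos hm))]
  · intro γ h; cases h
  · intro γ
    rw [hinit]
    split
    · simpa
    · simp; tauto
  · intro γ h; rw [hinit] at h; split at h <;> cases h
  · intro γ h; rw [hinit] at h; split at h <;> cases h
  · intro γ h; rw [hinit] at h; split at h <;> cases h
  · intro γ hγ
    right
    rw [hinit, if_neg (mem_D_not_MD hγ)]
  · intro γ x _ _ _ h; cases h
  · intro X c ρ _ h; cases h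
  · intro X c ρ hXc _ hcρ hρX _
    rw [hinit]
    rw [if_neg]
    intro hm
    obtain ⟨d1, d2, d3⟩ := hD.1 _ hXc
    exact hm.2.1 (singular_of_col hD ⟨d1, hcρ, by omega⟩ hXc hρX)

variable {u l' : List (ℕ × ℕ)} {ξ : ℕ × ℕ}

lemma pos_of_hroot (hroot : rootList n = u ++ ξ :: l') : IsPosRoot n ξ :=
  mem_rootList.1 (hroot ▸ (List.mem_append.2 (Or.inr List.mem_cons_self)))

lemma key_lt_of_mem_u (hroot : rootList n = u ++ ξ :: l') {γ : ℕ × ℕ} (h : γ ∈ u) :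
    key n γ < key n ξ := by
  have hp := rootList_pairwise n
  rw [hroot, List.pairwise_append] at hp
  exact hp.2.2 γ h ξ List.mem_cons_self

lemma key_lt_of_mem_l' (hroot : rootList n = u ++ ξ :: l') {γ : ℕ × ℕ} (h : γ ∈ l') :
    key n ξ < key n γ := by
  have hp := rootList_pairwise n
  rw [hroot, List.pairwise_append] at hp
  exact (List.pairwise_cons.1 hp.2.1).1 γ h

lemma not_mem_u (hroot : rootList n = u ++ ξ :: l') : ξ ∉ u :=
  fun h => lt_irrefl _ (key_lt_of_mem_u hroot h)

lemma mem_u_of_key_lt (hroot : rootList n = u ++ ξ :: l') {γ : ℕ × ℕ}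
    (hpos : IsPosRoot n γ) (hlt : key n γ < key n ξ) : γ ∈ u := by
  have hm : γ ∈ rootList n := mem_rootList.2 hpos
  rw [hroot] at hm
  rcases List.mem_append.1 hm with h | h
  · exact h
  rcases List.mem_cons.1 h with rfl | h
  · omega
  · have := key_lt_of_mem_l' hroot h; omega

/-- Processed elements: same row, smaller column. -/
lemma mem_u_row (hroot : rootList n = u ++ ξ :: l') {y : ℕ}
    (hpos : IsPosRoot n (ξ.1, y)) (hy : y < ξ.2) : (ξ.1, y) ∈ u := by
  have hξ := pos_of_hroot hroot
  refine mem_u_of_key_lt hroot hpos ?_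
  exact key_lt_of_col_lt (by exact hpos.2.2) (by exact hξ.2.2) hy hpos.1 (by have := hpos.2.1; omega)

/-- Processed elements: same column, larger row. -/
lemma mem_u_col (hroot : rootList n = u ++ ξ :: l') {x : ℕ}
    (hpos : IsPosRoot n (x, ξ.2)) (hx : ξ.1 < x) : (x, ξ.2) ∈ u := by
  refine mem_u_of_key_lt hroot hpos ?_
  exact key_lt_of_row_gt (by exact hpos.2.2) hpos.1 rfl hx

/-- Members of `u` in the same row as `ξ` have smaller column. -/
lemma col_lt_of_mem_u_row (hroot : rootList n = u ++ ξ :: l') {y : ℕ}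
    (h : (ξ.1, y) ∈ u) : y < ξ.2 := by
  have hξ := pos_of_hroot hroot
  have hpos : IsPosRoot n (ξ.1, y) := mem_rootList.1 (hroot ▸ List.mem_append.2 (Or.inl h))
  have hk := key_lt_of_mem_u hroot h
  rw [key_lt_iff hpos hξ] at hk
  rcases hk with h | ⟨h1, h2⟩
  · exact h
  · omega

/-- Members of `u` in the same column as `ξ` have larger row. -/
lemma row_gt_of_mem_u_col (hroot : rootList n = u ++ ξ :: l') {x : ℕ}
    (h : (x, ξ.2) ∈ u) : ξ.1 < x := by
  have hξ := pos_of_hroot hroot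
  have hpos : IsPosRoot n (x, ξ.2) := mem_rootList.1 (hroot ▸ List.mem_append.2 (Or.inl h))
  have hk := key_lt_of_mem_u hroot h
  rw [key_lt_iff hpos hξ] at hk
  rcases hk with h | ⟨h1, h2⟩
  · simp at h
  · exact h2

/-- No member of `u` has column strictly larger than `ξ`'s. -/
lemma col_le_of_mem_u (hroot : rootList n = u ++ ξ :: l') {γ : ℕ × ℕ}
    (h : γ ∈ u) : γ.2 ≤ ξ.2 := by
  have hξ := pos_of_hroot hroot
  have hpos : IsPosRoot n γ := mem_rootList.1 (hroot ▸ List.mem_append.2 (Or.inl h))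
  have hk := key_lt_of_mem_u hroot h
  rw [key_lt_iff hpos hξ] at hk
  omega

end DInvariant

section Step
variable {n : ℕ} {D : Set (ℕ × ℕ)} {u l' : List (ℕ × ℕ)} {ξ : ℕ × ℕ} {s : MState}

lemma ms_ne {γ : ℕ × ℕ} (h : s γ ≠ none) : markStep s ξ γ ≠ none :=
  fun hh => h (markStep_none hh).1

/-- At a live step, the row of `ξ` contains a `D`-element weakly to the left. -/
lemma step_rowD (hD : IsBasic n D) (hroot : rootList n = u ++ ξ :: l')
    (hI : DInv n D u s) (hs : s ξ = none) : ∃ j ≤ ξ.2, (ξ.1, j) ∈ D := by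
  have hξpos := pos_of_hroot hroot
  have hMD : ξ ∉ MD n D := by
    intro h
    have := (hI.i2 ξ).2 h
    rw [hs] at this; cases this
  rcases of_not_mem_MD hD hξpos hMD with h | ⟨j, hj, hjD⟩ | ⟨x, hx, hxD⟩
  · exact ⟨ξ.2, le_refl _, by rwa [Prod.mk.eta]⟩
  · exact ⟨j, le_of_lt hj, hjD⟩
  · exfalso
    have hxpos : IsPosRoot n (x, ξ.2) := by
      obtain ⟨d1, d2, d3⟩ := hD.1 _ hxD
      exact ⟨hξpos.1, by have := hξpos.2.1; omega, d3⟩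
    exact hI.i7 ξ x hξpos.2.1 hx hxD (mem_u_col hroot hxpos hx) hs

/-- At a live step, if `ξ ∉ D` then the `D`-element of its row is strictly left. -/
lemma step_rowD_lt (hD : IsBasic n D) (hroot : rootList n = u ++ ξ :: l')
    (hI : DInv n D u s) (hs : s ξ = none) (hξD : ξ ∉ D) :
    ∃ j < ξ.2, (ξ.1, j) ∈ D := by
  obtain ⟨j, hj, hjD⟩ := step_rowD hD hroot hI hs
  rcases eq_or_lt_of_le hj with rfl | h
  · exact absurd (by rwa [Prod.mk.eta] at hjD) hξD
  · exact ⟨j, h, hjD⟩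

/-- When the step is at a `D`-element, the cells of its row strictly to the
right (up to the diagonal) are unmarked. -/
lemma step_beta_none (hD : IsBasic n D) (hroot : rootList n = u ++ ξ :: l')
    (hI : DInv n D u s) (hξD : ξ ∈ D) {ρ : ℕ}
    (h1 : ξ.2 < ρ) (h2 : ρ < ξ.1) : s (ξ.1, ρ) = none := by
  have hξpos := pos_of_hroot hroot
  have hξD' : (ξ.1, ξ.2) ∈ D := by rwa [Prod.mk.eta]
  cases h : s (ξ.1, ρ) with
  | none => rfl
  | some m =>
    exfalso
    cases m with
    | bullet =>
      have hmd := (hI.i2 _).1 h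
      exact hmd.2.1 (singular_of_row hD ⟨by omega, h2, hξpos.2.2⟩ hξD' h1)
    | otimes =>
      have := col_le_of_mem_u hroot (hI.i3 _ h).1
      simp at this; omega
    | plus =>
      obtain ⟨x, hx, hxu⟩ := hI.i5 _ h
      have := col_le_of_mem_u hroot hxu
      simp at this; omega
    | minus =>
      obtain ⟨y, hy, hyu, j, hj, hjD⟩ := hI.i4 _ h
      simp at hyu hjD
      have hje : j = ξ.2 := row_uniq hD hjD hξD'
      have := col_lt_of_mem_u_row hroot hyu
      omega

lemma inv_skip (hroot : rootList n = u ++ ξ :: l') (hI : DInv n D u s)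
    (hs : s ξ ≠ none) : DInv n D (u ++ [ξ]) s := by
  have hmemu : ∀ γ : ℕ × ℕ, γ ∈ u → γ ∈ u ++ [ξ] := fun γ h => List.mem_append.2 (Or.inl h)
  have hnotD : ξ ∉ D := by
    intro h
    rcases hI.i6 ξ h with h' | h'
    · exact not_mem_u hroot h'
    · exact hs h'
  constructor
  · exact hI.i0
  · intro γ hγ
    rcases List.mem_append.1 hγ with h | h
    · exact hI.i1 γ h
    · rw [List.mem_singleton.1 h]; exact hs
  · exact hI.i2
  · intro γ h; obtain ⟨h1, h2⟩ := hI.i3 γ h; exact ⟨hmemu γ h1, h2⟩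
  · intro γ h; obtain ⟨y, h1, h2, h3⟩ := hI.i4 γ h; exact ⟨y, h1, hmemu _ h2, h3⟩
  · intro γ h; obtain ⟨x, h1, h2⟩ := hI.i5 γ h; exact ⟨x, h1, hmemu _ h2⟩
  · intro γ h; rcases hI.i6 γ h with h' | h'
    · exact Or.inl (hmemu _ h')
    · exact Or.inr h'
  · intro γ x h1 h2 h3 h4
    rcases List.mem_append.1 h4 with h' | h'
    · exact hI.i7 γ x h1 h2 h3 h'
    · exfalso
      exact hnotD ((List.mem_singleton.1 h') ▸ h3)
  · intro X c ρ h1 h2 h3 h4 h5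
    rcases List.mem_append.1 h2 with h' | h'
    · exact hI.i8 X c ρ h1 h' h3 h4 h5
    · exact absurd ((List.mem_singleton.1 h') ▸ h1) hnotD
  · intro X c ρ h1 h2 h3 h4 h5
    exact hI.i9 X c ρ h1 (fun hc => h2 (hmemu _ hc)) h3 h4 h5

lemma inv_step (hD : IsBasic n D) (hroot : rootList n = u ++ ξ :: l')
    (hI : DInv n D u s) (hs : s ξ = none) :
    DInv n D (u ++ [ξ]) (markStep s ξ) := by
  have hξpos := pos_of_hroot hroot
  obtain ⟨hp1, hp2, hp3⟩ := hξpos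
  have hξmem : ξ ∈ u ++ [ξ] := List.mem_append.2 (Or.inr (List.mem_singleton.2 rfl))
  have hmemu : ∀ γ : ℕ × ℕ, γ ∈ u → γ ∈ u ++ [ξ] := fun γ h => List.mem_append.2 (Or.inl h)
  have hKey : ∃ j ≤ ξ.2, (ξ.1, j) ∈ D := step_rowD hD hroot hI hs
  constructor
  -- i0
  · intro γ hγ
    rcases markStep_cases s ξ γ with ⟨rfl, h⟩ | ⟨h1, h2, h3, _, _, _⟩ |
      ⟨h1, h2, h3, _, _, _⟩ | h
    · exact absurd ⟨hp1, hp2, hp3⟩ hγ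
    · exact absurd ⟨by omega, by omega, by omega⟩ hγ
    · exact absurd ⟨by omega, by omega, by omega⟩ hγ
    · rw [h]; exact hI.i0 γ hγ
  -- i1
  · intro γ hγ
    rcases List.mem_append.1 hγ with h | h
    · exact ms_ne (hI.i1 γ h)
    · rw [List.mem_singleton.1 h, markStep_self]; simp
  -- i2
  · intro γ
    constructor
    · intro h
      rcases markStep_cases s ξ γ with ⟨rfl, h'⟩ | ⟨_, _, _, _, _, h'⟩ |
        ⟨_, _, _, _, _, h'⟩ | h'
      · rw [h'] at h; cases h
      · rw [h'] at h; cases h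
      · rw [h'] at h; cases h
      · rw [h'] at h; exact (hI.i2 γ).1 h
    · intro h
      have hb := (hI.i2 γ).2 h
      rcases markStep_cases s ξ γ with ⟨rfl, h'⟩ | ⟨_, _, _, h4, _, h'⟩ |
        ⟨_, _, _, h4, _, h'⟩ | h'
      · rw [hs] at hb; cases hb
      · rw [h4] at hb; cases hb
      · rw [h4] at hb; cases hb
      · rw [h', hb]
  -- i3
  · intro γ h
    rcases markStep_cases s ξ γ with ⟨rfl, h'⟩ | ⟨_, _, _, _, _, h'⟩ |
      ⟨_, _, _, _, _, h'⟩ | h'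
    · exact ⟨hξmem, hKey⟩
    · rw [h'] at h; cases h
    · rw [h'] at h; cases h
    · rw [h'] at h
      obtain ⟨h1, h2⟩ := hI.i3 γ h
      exact ⟨hmemu _ h1, h2⟩
  -- i4
  · intro γ h
    rcases markStep_cases s ξ γ with ⟨rfl, h'⟩ | ⟨_, _, _, _, _, h'⟩ |
      ⟨h1, h2, h3, _, _, h'⟩ | h'
    · rw [h'] at h; cases h
    · rw [h'] at h; cases h
    · refine ⟨ξ.2, h2, ?_, by rw [h1]; exact hKey⟩
      rw [h1, Prod.mk.eta]; exact hξmem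
    · rw [h'] at h
      obtain ⟨y, h1, h2, h3⟩ := hI.i4 γ h
      exact ⟨y, h1, hmemu _ h2, h3⟩
  -- i5
  · intro γ h
    rcases markStep_cases s ξ γ with ⟨rfl, h'⟩ | ⟨h1, h2, h3, _, _, h'⟩ |
      ⟨_, _, _, _, _, h'⟩ | h'
    · rw [h'] at h; cases h
    · refine ⟨ξ.1, h3, ?_⟩
      rw [h1, Prod.mk.eta]; exact hξmem
    · rw [h'] at h; cases h
    · rw [h'] at h
      obtain ⟨x, h1, h2⟩ := hI.i5 γ h
      exact ⟨x, h1, hmemu _ h2⟩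
  -- i6
  · intro γ hγD
    by_cases hγu : γ ∈ u ++ [ξ]
    · exact Or.inl hγu
    right
    have hγu' : γ ∉ u := fun h => hγu (hmemu _ h)
    have hγξ : γ ≠ ξ := fun h => hγu (h ▸ hξmem)
    have hsγ : s γ = none := by
      rcases hI.i6 γ hγD with h | h
      · exact absurd h hγu'
      · exact h
    rcases markStep_cases s ξ γ with ⟨rfl, h'⟩ | ⟨h1, h2, h3, h4, h5, h'⟩ |
      ⟨h1, h2, h3, h4, h5, h'⟩ | h'
    · exact absurd rfl hγξ
    · -- plus case: γ = (γ.1, ξ.2) ∈ D would be hit; use i8 to contradict h5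
      exfalso
      have hγD' : (γ.1, ξ.2) ∈ D := by rw [← h1, Prod.mk.eta]; exact hγD
      have hξD : ξ ∉ D := by
        intro hc
        have hc' : (ξ.1, ξ.2) ∈ D := by rwa [Prod.mk.eta]
        have := col_uniq hD hγD' hc'
        exact hγξ (Prod.ext this h1)
      obtain ⟨c₁, hc₁, hc₁D⟩ := step_rowD_lt hD hroot hI hs hξD
      obtain ⟨d1, _, _⟩ := hD.1 _ hc₁D
      have hc₁u : (ξ.1, c₁) ∈ u := mem_u_row hroot ⟨d1, by omega, hp3⟩ hc₁
      exact hI.i8 ξ.1 c₁ γ.1 hc₁D hc₁u (by omega) h3 ⟨ξ.2, by omega, hγD'⟩ h5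
    · -- minus case: γ = (ξ.1, γ.2) ∈ D contradiction via row uniqueness
      exfalso
      have hγD' : (ξ.1, γ.2) ∈ D := by rw [← h1, Prod.mk.eta]; exact hγD
      obtain ⟨j, hj, hjD⟩ := hKey
      have := row_uniq hD hjD hγD'
      omega
    · rw [h', hsγ]
  -- i7
  · intro γ x h1 h2 h3 h4
    rcases List.mem_append.1 h4 with h' | h'
    · exact ms_ne (hI.i7 γ x h1 h2 h3 h')
    · have hxξ : (x, γ.2) = ξ := List.mem_singleton.1 h'
      have hξD : ξ ∈ D := hxξ ▸ h3
      have hx1 : ξ.1 = x := by rw [← hxξ]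
      have hx2 : ξ.2 = γ.2 := by rw [← hxξ]
      by_cases hsγ : s γ = none
      · have : markStep s ξ γ = some Mark.plus := by
          unfold markStep
          rw [if_neg (show γ ≠ ξ by intro h; rw [h] at h2; omega)]
          rw [if_pos ⟨hx2.symm, by omega, by omega, hsγ,
            step_beta_none hD hroot hI hξD (by omega) (by omega)⟩]
        rw [this]; simp
      · exact ms_ne hsγ
  -- i8
  · intro X c ρ h1 h2 h3 h4 h5
    rcases List.mem_append.1 h2 with h' | h'
    · exact ms_ne (hI.i8 X c ρ h1 h' h3 h4 h5)
    · have hxξ : (X, c) = ξ := List.mem_singleton.1 h'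
      have hξD : ξ ∈ D := hxξ ▸ h1
      have hx1 : ξ.1 = X := by rw [← hxξ]
      have hx2 : ξ.2 = c := by rw [← hxξ]
      by_cases hsγ : s (X, ρ) = none
      · have : markStep s ξ (X, ρ) = some Mark.minus := by
          unfold markStep
          rw [if_neg (show (X, ρ) ≠ ξ by
            intro h; rw [← h] at hx2; simp at hx2; omega)]
          rw [if_neg (show ¬((X, ρ).2 = ξ.2 ∧ _ ∧ _ ∧ _ ∧ _) by
            rintro ⟨hc, -⟩; simp at hc; omega)]
          rw [if_pos ⟨by simp only; omega, by simp only; omega, by simp only; omega, hsγ, by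
            simp only
            rw [show ξ.2 = c from hx2]
            exact hI.i9 X c ρ h1 (hxξ ▸ not_mem_u hroot) h3 h4 h5⟩]
        rw [this]; simp
      · exact ms_ne hsγ
  -- i9
  · intro X c ρ h1 h2 h3 h4 h5
    have h2u : (X, c) ∉ u := fun h => h2 (hmemu _ h)
    have h2ξ : (X, c) ≠ ξ := fun h => h2 (h ▸ hξmem)
    have hold : s (ρ, c) = none := hI.i9 X c ρ h1 h2u h3 h4 h5
    obtain ⟨dX1, dX2, dX3⟩ := hD.1 _ h1
    have hXpos : IsPosRoot n (X, c) := ⟨dX1, dX2, dX3⟩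
    have hne1 : (ρ, c) ≠ ξ := by
      intro hc
      apply h2u
      apply mem_u_of_key_lt hroot hXpos
      rw [← hc]
      exact key_lt_of_row_gt (a := (X, c)) (b := (ρ, c)) dX3 dX1 rfl h4
    have hne2 : ¬((ρ, c).2 = ξ.2 ∧ ξ.2 < (ρ, c).1 ∧ (ρ, c).1 < ξ.1 ∧
        s (ρ, c) = none ∧ s (ξ.1, (ρ, c).1) = none) := by
      rintro ⟨b1, b2, b3, b4, b5⟩
      simp only at b1 b2 b3 b4 b5
      have hXne : ξ.1 ≠ X := by
        intro h
        exact h2ξ (Prod.ext h.symm b1)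
      have hXlt : X < ξ.1 := by
        have hXr : (X, c) ∈ rootList n := mem_rootList.2 hXpos
        rw [hroot] at hXr
        rcases List.mem_append.1 hXr with h | h
        · exact absurd h h2u
        rcases List.mem_cons.1 h with h | h
        · exact absurd h h2ξ
        have hk := key_lt_of_mem_l' hroot h
        rw [key_lt_iff (pos_of_hroot hroot) hXpos] at hk
        simp only at hk
        omega
      have hξD : ξ ∉ D := by
        intro hcD
        have hc' : (ξ.1, c) ∈ D := by rw [b1, Prod.mk.eta]; exact hcD
        exact hXne (col_uniq hD hc' h1)
      obtain ⟨c₁, hc₁, hc₁D⟩ := step_rowD_lt hD hroot hI hs hξD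
      obtain ⟨e1, _, _⟩ := hD.1 _ hc₁D
      have hc₁u : (ξ.1, c₁) ∈ u := mem_u_row hroot ⟨e1, by omega, hp3⟩ hc₁
      obtain ⟨J', hJ'1, hJ'2⟩ := h5
      exact hI.i8 ξ.1 c₁ ρ hc₁D hc₁u (by omega) (by omega) ⟨J', by omega, hJ'2⟩ b5
    have hne3 : ¬((ρ, c).1 = ξ.1 ∧ ξ.2 < (ρ, c).2 ∧ (ρ, c).2 < ξ.1 ∧
        s (ρ, c) = none ∧ s ((ρ, c).2, ξ.2) = none) := by
      rintro ⟨b1, b2, b3, b4, b5⟩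
      simp only at b1 b2 b3 b4 b5
      obtain ⟨j, hj, hjD⟩ := hKey
      rw [← b1] at hjD
      obtain ⟨J', hJ'1, hJ'2⟩ := h5
      have := row_uniq hD hjD hJ'2
      omega
    show markStep s ξ (ρ, c) = none
    unfold markStep
    rw [if_neg hne1, if_neg hne2, if_neg hne3]
    exact hold

end Step

section Run
variable {n : ℕ} {D : Set (ℕ × ℕ)}

lemma diagRun_cons (s : MState) (ξ : ℕ × ℕ) (l' : List (ℕ × ℕ)) :
    diagRun s (ξ :: l') = if s ξ = none then
      (ξ, markStep s ξ) :: diagRun (markStep s ξ) l' else diagRun s l' := by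
  conv_lhs => rw [diagRun]

lemma run_inv_A (hD : IsBasic n D) :
    ∀ (l u : List (ℕ × ℕ)) (s : MState), rootList n = u ++ l → DInv n D u s →
      ∀ γ ∈ D, γ ∈ l → γ ∈ (diagRun s l).map Prod.fst := by
  intro l
  induction l with
  | nil => intro u s _ _ γ _ h; cases h
  | cons ξ l' ih =>
    intro u s hroot hI γ hγD hγl
    by_cases hs : s ξ = none
    · rw [diagRun_cons, if_pos hs]
      rcases List.mem_cons.1 hγl with rfl | h
      · simp
      · simp only [List.map_cons, List.mem_cons]
        exact Or.inr (ih (u ++ [ξ]) (markStep s ξ)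
          (by rw [hroot]; simp) (inv_step hD hroot hI hs) γ hγD h)
    · rw [diagRun_cons, if_neg hs]
      rcases List.mem_cons.1 hγl with rfl | h
      · exfalso
        rcases hI.i6 γ hγD with h' | h'
        · exact not_mem_u hroot h'
        · exact hs h'
      · exact ih (u ++ [ξ]) s (by rw [hroot]; simp) (inv_skip hroot hI hs) γ hγD h

lemma run_inv_C (hD : IsBasic n D) :
    ∀ (l u : List (ℕ × ℕ)) (s : MState), rootList n = u ++ l → DInv n D u s →
      ∀ γ, γ ∈ (diagRun s l).map Prod.fst → ∃ j ≤ γ.2, (γ.1, j) ∈ D := by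
  intro l
  induction l with
  | nil => intro u s _ _ γ h; simp [diagRun] at h
  | cons ξ l' ih =>
    intro u s hroot hI γ hγ
    by_cases hs : s ξ = none
    · rw [diagRun_cons, if_pos hs] at hγ
      simp only [List.map_cons, List.mem_cons] at hγ
      rcases hγ with rfl | h
      · exact step_rowD hD hroot hI hs
      · exact ih (u ++ [ξ]) (markStep s ξ) (by rw [hroot]; simp)
          (inv_step hD hroot hI hs) γ h
    · rw [diagRun_cons, if_neg hs] at hγ
      exact ih (u ++ [ξ]) s (by rw [hroot]; simp) (inv_skip hroot hI hs) γ hγ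

lemma mem_CD_iff {γ : ℕ × ℕ} :
    γ ∈ CD n D ↔ γ ∈ (diagRun (initMark n D) (rootList n)).map Prod.fst := Iff.rfl

lemma D_subset_CD (hD : IsBasic n D) {γ : ℕ × ℕ} (hγ : γ ∈ D) : γ ∈ CD n D := by
  rw [mem_CD_iff]
  exact run_inv_A hD (rootList n) [] (initMark n D) rfl (inv_init hD) γ hγ
    (mem_rootList.2 (hD.1 γ hγ))

lemma CD_rowD (hD : IsBasic n D) {γ : ℕ × ℕ} (hγ : γ ∈ CD n D) :
    ∃ j ≤ γ.2, (γ.1, j) ∈ D :=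
  run_inv_C hD (rootList n) [] (initMark n D) rfl (inv_init hD) γ (mem_CD_iff.1 hγ)

end Run


/-- a positive root `ξ` belongs to `D` iff `ξ ∈ C(D)` and
`A_ξ = ∅`. -/
theorem stmt7 (n : ℕ) (hn : 2 ≤ n) (D : Set (ℕ × ℕ)) (hD : IsBasic n D)
    (ξ : ℕ × ℕ) (hξ : IsPosRoot n ξ) :
    ξ ∈ D ↔ ξ ∈ CD n D ∧ AD n D ξ = ∅ := by
  constructor
  · intro hξD
    refine ⟨D_subset_CD hD hξD, ?_⟩
    rw [Set.eq_empty_iff_forall_notMem]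
    rintro γ' ⟨hγ'C, hrow, hcol⟩
    obtain ⟨j, hj, hjD⟩ := CD_rowD hD hγ'C
    rw [hrow] at hjD
    have hξD' : (ξ.1, ξ.2) ∈ D := by rwa [Prod.mk.eta]
    have := row_uniq hD hjD hξD'
    omega
  · rintro ⟨hC, hA⟩
    obtain ⟨j, hj, hjD⟩ := CD_rowD hD hC
    rcases eq_or_lt_of_le hj with heq | hlt
    · rw [heq] at hjD
      rwa [Prod.mk.eta] at hjD
    · exfalso
      have hmem : (ξ.1, j) ∈ AD n D ξ :=
        ⟨D_subset_CD hD hjD, rfl, hlt⟩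
      rw [hA] at hmem
      exact hmem
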